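/- arXiv:2309.16411 — 3 statements merged into one kernel-verified Lean document; each statement's English description precedes it below -/
import Mathlib

section
/- Let G be a finite graph on n vertices. If every edge separator of G has size at least εn, then there exists a vertex subset U with |U| ≥ 2n/3 such that the induced subgraph G[U] is a (3/2)ε-expander. -/
open Finset

variable {V : Type*} [Fintype V] [DecidableEq V]

/-- Number of edges of `G` with one endpoint in `A` and the other in `W` (for disjoint `A`, `W`),
counted as ordered pairs, hence exactly once per edge. -/
def bdryTo (G : SimpleGraph V) [DecidableRel G.Adj] (A W : Finset V) : ℕ :=
  ((A ×ˢ W).filter fun p => G.Adj p.1 p.2).card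

/-- Number of boundary edges of `A` inside the induced subgraph `G[B]`:
edges of `G` with one endpoint in `A` and the other in `B \ A`. -/
def bdryIn (G : SimpleGraph V) [DecidableRel G.Adj] (B A : Finset V) : ℕ :=
  bdryTo G A (B \ A)

/-- The induced subgraph `G[U]` is an `ε`-expander: every `W ⊆ U` with `|W| ≤ |U|/2`
has at least `ε|W|` boundary edges inside `G[U]`. -/
def IsExpanderOn (G : SimpleGraph V) [DecidableRel G.Adj] (U : Finset V) (ε : ℝ) : Prop :=
  ∀ W ⊆ U, 2 * W.card ≤ U.card → ε * W.card ≤ (bdryIn G U W : ℝ)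

/-!
Start from `U = V` and, as long as `G[U]` is not a `(3/2)ε`-expander, delete from `U` a set `W`
with `|W| ≤ |U|/2` and fewer than `(3/2)ε|W|` edges to `U \ W`. Throughout, the cut between `U`
and its complement has fewer than `(3/2)ε|Uᶜ|` edges, since each deleted `W` adds fewer than
`(3/2)ε|W|` new ones. Moreover `|U \ W| ≥ |U|/2 ≥ n/3`, so if `U` ever dropped below `2n/3`,
the pair `(Uᶜ, U)` would be an edge separator with fewer than `(3/2)ε · (2n/3) = εn` edges.
-/

section

variable (G : SimpleGraph V) [DecidableRel G.Adj]

omit [Fintype V] [DecidableEq V] in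
lemma bdryTo_mono_right (A : Finset V) {W W' : Finset V} (hW : W' ⊆ W) :
    bdryTo G A W' ≤ bdryTo G A W :=
  card_le_card (filter_subset_filter _ (product_subset_product Subset.rfl hW))

omit [Fintype V] in
lemma bdryTo_union_left_le (A B W : Finset V) :
    bdryTo G (A ∪ B) W ≤ bdryTo G A W + bdryTo G B W := by
  unfold bdryTo
  rw [union_product, filter_union]
  exact card_union_le _ _

lemma bdryTo_compl_sdiff_le (U W : Finset V) :
    bdryTo G (U \ W)ᶜ (U \ W) ≤ bdryTo G Uᶜ U + bdryIn G U W := by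
  rw [compl_sdiff, himp_eq, sup_eq_union, union_comm]
  calc bdryTo G (Uᶜ ∪ W) (U \ W)
      ≤ bdryTo G Uᶜ (U \ W) + bdryTo G W (U \ W) := bdryTo_union_left_le G _ _ _
    _ ≤ bdryTo G Uᶜ U + bdryIn G U W :=
        Nat.add_le_add_right (bdryTo_mono_right G _ sdiff_subset) _

lemma card_compl_sdiff {U W : Finset V} (hWU : W ⊆ U) :
    (U \ W)ᶜ.card = Uᶜ.card + W.card := by
  rw [compl_sdiff, himp_eq, sup_eq_union, card_union_of_disjoint]
  · exact add_comm _ _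
  · exact disjoint_compl_right.mono_left hWU

omit [Fintype V] in
lemma exists_sparse_of_not_isExpanderOn {U : Finset V} {δ : ℝ}
    (hU : ¬ IsExpanderOn G U δ) :
    ∃ W ⊆ U, W.Nonempty ∧ 2 * W.card ≤ U.card ∧ (bdryIn G U W : ℝ) < δ * W.card := by
  simp only [IsExpanderOn, not_forall, not_le, exists_prop] at hU
  obtain ⟨W, hWU, hWhalf, hWsparse⟩ := hU
  refine ⟨W, hWU, nonempty_iff_ne_empty.2 ?_, hWhalf, hWsparse⟩
  rintro rfl
  exact (Nat.cast_nonneg _).not_gt (by simpa using hWsparse)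

variable {G} {ε : ℝ}
  (h : ∀ V₁ : Finset V, 3 * V₁.card ≤ 2 * Fintype.card V →
    3 * V₁ᶜ.card ≤ 2 * Fintype.card V →
    ε * Fintype.card V ≤ (bdryTo G V₁ V₁ᶜ : ℝ))
include h

lemma two_mul_card_le_of_bdryTo_lt {U : Finset V} (hU : Fintype.card V ≤ 3 * U.card)
    (hcut : (bdryTo G Uᶜ U : ℝ) < 3 / 2 * ε * Uᶜ.card) :
    2 * Fintype.card V ≤ 3 * U.card := by
  by_contra! hsmall
  have hcompl : Uᶜ.card + U.card = Fintype.card V := card_compl_add_card U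
  have hsep : 3 * Uᶜ.card ≤ 2 * Fintype.card V := by omega
  have hbound := h Uᶜ hsep (by rw [compl_compl]; omega)
  rw [compl_compl] at hbound
  have hsep' : (3 * Uᶜ.card : ℝ) ≤ 2 * Fintype.card V := by exact_mod_cast hsep
  rcases le_or_gt 0 ε with hε | hε
  · linarith [mul_le_mul_of_nonneg_left hsep' hε]
  · linarith [mul_nonpos_of_nonpos_of_nonneg hε.le (Nat.cast_nonneg (α := ℝ) Uᶜ.card),
      Nat.cast_nonneg (α := ℝ) (bdryTo G Uᶜ U)]

lemma exists_isExpanderOn_of_bdryTo_le (U : Finset V) (hU : 2 * Fintype.card V ≤ 3 * U.card)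
    (hcut : (bdryTo G Uᶜ U : ℝ) ≤ 3 / 2 * ε * Uᶜ.card) :
    ∃ U' : Finset V, 2 * Fintype.card V ≤ 3 * U'.card ∧ IsExpanderOn G U' (3 / 2 * ε) := by
  induction U using Finset.strongInduction with
  | H U ih =>
    by_cases hexp : IsExpanderOn G U (3 / 2 * ε)
    · exact ⟨U, hU, hexp⟩
    obtain ⟨W, hWU, hWne, hWhalf, hWsparse⟩ := exists_sparse_of_not_isExpanderOn G hexp
    have hcut' : (bdryTo G (U \ W)ᶜ (U \ W) : ℝ) < 3 / 2 * ε * (U \ W)ᶜ.card := by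
      have hsum : (bdryTo G (U \ W)ᶜ (U \ W) : ℝ) ≤ bdryTo G Uᶜ U + bdryIn G U W := by
        exact_mod_cast bdryTo_compl_sdiff_le G U W
      rw [card_compl_sdiff hWU]
      push_cast
      linarith
    have hhalf : Fintype.card V ≤ 3 * (U \ W).card := by
      rw [card_sdiff_of_subset hWU]
      omega
    exact ih (U \ W) (sdiff_ssubset hWU hWne)
      (two_mul_card_le_of_bdryTo_lt h hhalf hcut') hcut'.le

end

/-- If every edge separator of `G` (balanced bipartition) has at least `εn` crossing edges, then
some `U` with `|U| ≥ 2n/3` induces a `(3/2)ε`-expander. -/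
theorem stmt1 (G : SimpleGraph V) [DecidableRel G.Adj] (ε : ℝ)
    (h : ∀ V₁ : Finset V, 3 * V₁.card ≤ 2 * Fintype.card V →
      3 * V₁ᶜ.card ≤ 2 * Fintype.card V →
      ε * Fintype.card V ≤ (bdryTo G V₁ V₁ᶜ : ℝ)) :
    ∃ U : Finset V, 2 * Fintype.card V ≤ 3 * U.card ∧ IsExpanderOn G U (3 / 2 * ε) :=
  exists_isExpanderOn_of_bdryTo_le h univ (by rw [card_univ]; omega) (by simp [bdryTo])
end

section
/- Let G = (V,E) be a graph on n vertices, and let 0 < α ≤ 1/2. Suppose that every subset U ⊆ V with |U| ≤ αn satisfies |∂U|/|U| ≥ ε. Then there exists U ⊆ V with |U| ≥ (2/3)αn such that the induced subgraph G[U] is an ε/(4⌈log_{3/2}(1/α)⌉)-expander. -/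
/-!
Call `S` admissible at depth `k` if `|S| > αn`, `|S| 2^k ≤ n` and `|∂S| ≤ 2δk|S|`; the whole
vertex set is admissible at depth `0`. If an admissible `S` does not induce a `δ`-expander, take
`W ⊆ S` with `|W| ≤ |S|/2` and `|∂_S W| < δ|W|`. Either `|∂W| ≤ 2δ(k+1)|W|` and `W` is admissible
at depth `k + 1`, or `S \ W` is admissible at depth `k`, since
`|∂(S \ W)| = |∂S| - |∂W| + 2|∂_S W|`. In both cases the new set has more than `αn` vertices:
depth `k` forces `α 2^k < 1`, hence `k < ⌈log_{3/2}(1/α)⌉` and `2δ(k+1) < ε`, so a small set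
with that few boundary edges would contradict the hypothesis. Admissible sets strictly shrink,
so the descent ends at an expander on more than `αn` vertices.
-/

open Finset

variable {V : Type*} [Fintype V] [DecidableEq V]

section Interedges

variable {α : Type*} (G : SimpleGraph α) [DecidableRel G.Adj]

theorem bdryTo_eq_card_interedges (A B : Finset α) : bdryTo G A B = #(G.interedges A B) := rfl

theorem bdryTo_comm (A B : Finset α) : bdryTo G A B = bdryTo G B A :=
  have := G.symm
  Rel.card_interedges_comm A B

variable [DecidableEq α]

theorem bdryTo_union_right (A : Finset α) {B C : Finset α} (h : Disjoint B C) :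
    bdryTo G A (B ∪ C) = bdryTo G A B + bdryTo G A C := by
  have : G.interedges A (B ∪ C) = G.interedges A B ∪ G.interedges A C := by
    ext e
    simp only [SimpleGraph.mem_interedges_iff, mem_union]
    tauto
  simp only [bdryTo_eq_card_interedges, this,
    card_union_of_disjoint (G.interedges_disjoint_right A h)]

theorem bdryTo_union_left {A B : Finset α} (h : Disjoint A B) (C : Finset α) :
    bdryTo G (A ∪ B) C = bdryTo G A C + bdryTo G B C := by
  rw [bdryTo_comm, bdryTo_union_right G C h, bdryTo_comm G C, bdryTo_comm G C]

end Interedges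

theorem bdryIn_univ_sdiff_add (G : SimpleGraph V) [DecidableRel G.Adj] {W S : Finset V} (hWS : W ⊆ S) :
    bdryIn G univ (S \ W) + bdryIn G univ W = bdryIn G univ S + 2 * bdryIn G S W := by
  have hout : Disjoint (S \ W) (univ \ S) := disjoint_sdiff.mono_left sdiff_subset
  have hW : bdryIn G univ W = bdryIn G S W + bdryTo G W (univ \ S) := by
    have : univ \ W = (S \ W) ∪ (univ \ S) := by
      ext x; simp only [mem_sdiff, mem_union, mem_univ, true_and]; grind
    rw [bdryIn, bdryIn, this, bdryTo_union_right G W hout]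
  have hSW : bdryIn G univ (S \ W) = bdryIn G S W + bdryTo G (S \ W) (univ \ S) := by
    have : univ \ (S \ W) = W ∪ (univ \ S) := by
      ext x; simp only [mem_sdiff, mem_union, mem_univ, true_and]; grind
    rw [bdryIn, bdryIn, this, bdryTo_union_right G _ (disjoint_sdiff.mono_left hWS),
      bdryTo_comm G (S \ W) W]
  have hS : bdryIn G univ S = bdryTo G W (univ \ S) + bdryTo G (S \ W) (univ \ S) := by
    rw [bdryIn, ← bdryTo_union_left G disjoint_sdiff, union_sdiff_of_subset hWS]
  omega

theorem lt_ceil_logb_of_mul_two_pow_lt_one {b α : ℝ} (hb : 1 < b) (hb2 : b ≤ 2) (hα : 0 < α)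
    {k : ℕ} (hk : α * 2 ^ k < 1) : k < ⌈Real.logb b (1 / α)⌉₊ := by
  rw [Nat.lt_ceil, Real.lt_logb_iff_rpow_lt hb (by positivity), Real.rpow_natCast,
    lt_div_iff₀ hα, mul_comm]
  calc α * b ^ k ≤ α * 2 ^ k := by gcongr
    _ < 1 := hk

section Descent

variable (G : SimpleGraph V) [DecidableRel G.Adj]

def IsAdmissible (δ m : ℝ) (k : ℕ) (S : Finset V) : Prop :=
  m < S.card ∧ (S.card : ℝ) * 2 ^ k ≤ Fintype.card V ∧ (bdryIn G univ S : ℝ) ≤ 2 * δ * k * S.card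

variable {δ ε m : ℝ}

theorem lt_card_of_bdryIn_univ_le
    (hsmall : ∀ U : Finset V, U.Nonempty → (U.card : ℝ) ≤ m → ε * U.card ≤ (bdryIn G univ U : ℝ))
    {U : Finset V} (hU : U.Nonempty) {c : ℝ} (hc : c < ε)
    (hbd : (bdryIn G univ U : ℝ) ≤ c * U.card) : m < U.card := by
  by_contra! hUm
  have hpos : (0 : ℝ) < U.card := by exact_mod_cast hU.card_pos
  nlinarith [hsmall U hU hUm]

variable {G}

theorem IsAdmissible.exists_ssubset
    (hsmall : ∀ U : Finset V, U.Nonempty → (U.card : ℝ) ≤ m → ε * U.card ≤ (bdryIn G univ U : ℝ))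
    (hδ : ∀ k : ℕ, m * 2 ^ k < Fintype.card V → 2 * δ * (k + 1) < ε)
    {k : ℕ} {S : Finset V} (hS : IsAdmissible G δ m k S) (hexp : ¬ IsExpanderOn G S δ) :
    ∃ T ⊂ S, ∃ k', IsAdmissible G δ m k' T := by
  obtain ⟨hSm, hSk, hbd⟩ := hS
  obtain ⟨W, hWS, hW2, hWbd⟩ :
      ∃ W ⊆ S, 2 * W.card ≤ S.card ∧ (bdryIn G S W : ℝ) < δ * W.card := by
    simpa [IsExpanderOn] using hexp
  have hδW : 0 < δ * W.card := (Nat.cast_nonneg _).trans_lt hWbd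
  have hδ0 : 0 < δ := pos_of_mul_pos_left hδW (Nat.cast_nonneg _)
  have hWne : W.Nonempty := card_pos.mp <| Nat.cast_pos.mp (pos_of_mul_pos_right hδW hδ0.le)
  have hSW : ¬ S ⊆ W := fun h => by
    have := card_le_card h
    have := hWne.card_pos
    omega
  have hk : 2 * δ * (k + 1) < ε := hδ k <| by
    calc m * 2 ^ k < S.card * 2 ^ k := by gcongr
      _ ≤ _ := hSk
  by_cases hW : (bdryIn G univ W : ℝ) ≤ 2 * δ * (k + 1) * W.card
  · refine ⟨W, hWS.ssubset_of_not_subset hSW, k + 1,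
      lt_card_of_bdryIn_univ_le G hsmall hWne hk hW, ?_, mod_cast hW⟩
    have hW2' : 2 * (W.card : ℝ) ≤ S.card := by exact_mod_cast hW2
    calc (W.card : ℝ) * 2 ^ (k + 1) = 2 * W.card * 2 ^ k := by ring
      _ ≤ S.card * 2 ^ k := by gcongr
      _ ≤ _ := hSk
  · have hcut : (bdryIn G univ (S \ W) : ℝ) + bdryIn G univ W =
        bdryIn G univ S + 2 * bdryIn G S W := by
      exact_mod_cast bdryIn_univ_sdiff_add G hWS
    have hcard : ((S \ W).card : ℝ) = S.card - W.card := by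
      rw [card_sdiff_of_subset hWS, Nat.cast_sub (card_le_card hWS)]
    have hbd' : (bdryIn G univ (S \ W) : ℝ) ≤ 2 * δ * k * (S \ W).card := by
      rw [hcard]
      linarith
    refine ⟨S \ W, sdiff_ssubset hWS hWne, k,
      lt_card_of_bdryIn_univ_le G hsmall (sdiff_nonempty.mpr hSW) (by nlinarith) hbd', ?_, hbd'⟩
    calc ((S \ W).card : ℝ) * 2 ^ k ≤ S.card * 2 ^ k := by
          gcongr
          exact sdiff_subset
      _ ≤ _ := hSk

theorem IsAdmissible.exists_isExpanderOn
    (hsmall : ∀ U : Finset V, U.Nonempty → (U.card : ℝ) ≤ m → ε * U.card ≤ (bdryIn G univ U : ℝ))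
    (hδ : ∀ k : ℕ, m * 2 ^ k < Fintype.card V → 2 * δ * (k + 1) < ε)
    {k : ℕ} {S : Finset V} (hS : IsAdmissible G δ m k S) :
    ∃ U : Finset V, m < U.card ∧ IsExpanderOn G U δ := by
  induction S using Finset.strongInduction generalizing k with
  | H S ih =>
  by_cases hexp : IsExpanderOn G S δ
  · exact ⟨S, hS.1, hexp⟩
  obtain ⟨T, hTS, k', hT⟩ := hS.exists_ssubset hsmall hδ hexp
  exact ih T hTS hT

end Descent

/-- Expansion concentration: if every nonempty `U` with `|U| ≤ αn` satisfies `|∂U| ≥ ε|U|`, then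
there is `U` with `|U| ≥ (2/3)αn` inducing an `ε/(4⌈log_{3/2}(1/α)⌉)`-expander. -/
theorem stmt2 (G : SimpleGraph V) [DecidableRel G.Adj] (α ε : ℝ)
    (hα0 : 0 < α) (hα : α ≤ 1 / 2)
    (h : ∀ U : Finset V, U.Nonempty → (U.card : ℝ) ≤ α * Fintype.card V →
      ε * U.card ≤ (bdryIn G Finset.univ U : ℝ)) :
    ∃ U : Finset V, 2 / 3 * α * Fintype.card V ≤ (U.card : ℝ) ∧
      IsExpanderOn G U (ε / (4 * (⌈Real.logb (3 / 2) (1 / α)⌉₊ : ℝ))) := by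
  set T : ℕ := ⌈Real.logb (3 / 2) (1 / α)⌉₊
  have hαn : 0 ≤ α * Fintype.card V := by positivity
  rcases le_or_gt ε 0 with hε | hε
  · have hδ0 : ε / (4 * T) ≤ 0 := div_nonpos_of_nonpos_of_nonneg hε (by positivity)
    refine ⟨univ, by rw [card_univ]; nlinarith, fun W _ _ => ?_⟩
    exact (mul_nonpos_of_nonpos_of_nonneg hδ0 (Nat.cast_nonneg _)).trans (Nat.cast_nonneg _)
  rcases (Fintype.card V).eq_zero_or_pos with hn | hn
  · exact ⟨∅, by simp [hn], fun W hW _ => by simp [subset_empty.mp hW]⟩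
  have hδ (k : ℕ) (hk : α * Fintype.card V * 2 ^ k < Fintype.card V) :
      2 * (ε / (4 * T)) * (k + 1) < ε := by
    rw [mul_right_comm] at hk
    have hkT : (k : ℝ) + 1 ≤ T := by
      exact_mod_cast lt_ceil_logb_of_mul_two_pow_lt_one (by norm_num) (by norm_num) hα0
        ((mul_lt_iff_lt_one_left (by exact_mod_cast hn)).mp hk)
    have hT : (0 : ℝ) < T := by linarith [k.cast_nonneg (α := ℝ)]
    calc 2 * (ε / (4 * T)) * (k + 1) ≤ 2 * (ε / (4 * T)) * T := by gcongr
      _ = ε / 2 := by field_simp; ring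
      _ < ε := half_lt_self hε
  have huniv : IsAdmissible G (ε / (4 * T)) (α * Fintype.card V) 0 univ :=
    ⟨by rw [card_univ]; nlinarith [(Nat.cast_pos (α := ℝ)).mpr hn], by simp,
      by simp [bdryIn, bdryTo]⟩
  obtain ⟨U, hU, hexp⟩ := huniv.exists_isExpanderOn h hδ
  exact ⟨U, by linarith, hexp⟩
end

section
/- Let C be a classical [n,k,d] code whose connectivity graph G on n vertices has no induced ε-expander subgraph on m or more vertices. Then either d ≤ 3m or k ≤ 2c·log(n)·εn, where c is a universal constant. -/
/-!
Cut every induced subgraph on at least `m` vertices along a sparse cut, that is a set `W` with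
`|W| ≤ |U|/2` and fewer than `ε|W|` edges leaving it, delete the `W`-side endpoints of the cut
edges, and recurse on both sides. Charging each cut to the vertices of its smaller side at `ε` per
vertex, a vertex is charged at most `log₂ n` times, so at most `ε n log₂ n` bits are deleted; the
remaining bits fall apart into mutually non-adjacent pieces of fewer than `m` bits. No check meets
two pieces, so a codeword vanishing on the deleted bits restricts to a codeword on each piece, and
when `d > m` these restrictions vanish. Hence the deleted bits determine the codeword and `k ≤ ε n log₂ n`.
-/

open Finset

variable {V : Type*} [Fintype V] [DecidableEq V]

/-- Connectivity graph of a classical code with check matrix `H`: bits are vertices, two bits are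
adjacent iff some check contains both in its support. -/
def connGraph {r n : ℕ} (H : Matrix (Fin r) (Fin n) (ZMod 2)) : SimpleGraph (Fin n) where
  Adj u v := u ≠ v ∧ ∃ i, H i u ≠ 0 ∧ H i v ≠ 0
  symm := ⟨fun _ _ ⟨h1, i, ha, hb⟩ => ⟨h1.symm, i, hb, ha⟩⟩
  loopless := ⟨fun _ h => h.1 rfl⟩

instance {r n : ℕ} (H : Matrix (Fin r) (Fin n) (ZMod 2)) : DecidableRel (connGraph H).Adj :=
  fun _ _ => instDecidableAnd

open Matrix

lemma exists_sparse_cut_of_not_isExpanderOn {α : Type*} [DecidableEq α] {G : SimpleGraph α}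
    [DecidableRel G.Adj] {U : Finset α} {ε : ℝ} (h : ¬ IsExpanderOn G U ε) :
    ∃ W ⊆ U, W.Nonempty ∧ 2 * #W ≤ #U ∧ (bdryIn G U W : ℝ) < ε * #W := by
  simp only [IsExpanderOn, not_forall, not_le, exists_prop] at h
  obtain ⟨W, hWU, hW2, hcut⟩ := h
  refine ⟨W, hWU, nonempty_iff_ne_empty.2 ?_, hW2, hcut⟩
  rintro rfl
  simp only [card_empty, Nat.cast_zero, mul_zero] at hcut
  exact (Nat.cast_nonneg _).not_gt hcut

lemma mul_logb_add_mul_logb_add_le {a b : ℝ} (ha : 0 < a) (hab : a ≤ b) :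
    a * Real.logb 2 a + b * Real.logb 2 b + a ≤ (a + b) * Real.logb 2 (a + b) := by
  have hlog_a : Real.logb 2 a + 1 ≤ Real.logb 2 (a + b) := by
    calc Real.logb 2 a + 1 = Real.logb 2 (2 * a) := by
          rw [Real.logb_mul two_ne_zero ha.ne', Real.logb_self_eq_one one_lt_two, add_comm]
      _ ≤ Real.logb 2 (a + b) := Real.logb_le_logb_of_le one_lt_two (by positivity) (by linarith)
  have hlog_b : Real.logb 2 b ≤ Real.logb 2 (a + b) :=
    Real.logb_le_logb_of_le one_lt_two (by linarith) (by linarith)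
  nlinarith [mul_le_mul_of_nonneg_left hlog_a ha.le,
    mul_le_mul_of_nonneg_left hlog_b (ha.le.trans hab)]

/-- `S` cuts `U` into pieces of fewer than `m` vertices: every component of `G[U \ S]` is small,
phrased as every nonempty `X ⊆ U \ S` containing a small nonempty union of components of `G[X]`. -/
def IsSmallSeparator {α : Type*} [DecidableEq α] (G : SimpleGraph α) (m : ℕ) (U S : Finset α) :
    Prop :=
  ∀ X ⊆ U \ S, X.Nonempty → ∃ Y ⊆ X, Y.Nonempty ∧ #Y < m ∧ ∀ u ∈ Y, ∀ v ∈ X \ Y, ¬ G.Adj u v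

lemma IsSmallSeparator.union_of_cut {α : Type*} [DecidableEq α] {G : SimpleGraph α} {m : ℕ}
    {U W S₁ S₂ T : Finset α} (h₁ : IsSmallSeparator G m W S₁)
    (h₂ : IsSmallSeparator G m (U \ W) S₂) (hT : ∀ u ∈ W, ∀ v ∈ U \ W, G.Adj u v → u ∈ T) :
    IsSmallSeparator G m U (S₁ ∪ S₂ ∪ T) := by
  intro X hX hXne
  have hXU : X ⊆ U := hX.trans sdiff_subset
  by_cases hXW : (X ∩ W).Nonempty
  · obtain ⟨Y, hYX, hYne, hYm, hYcl⟩ := h₁ (X ∩ W) (fun x hx => by grind) hXW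
    refine ⟨Y, hYX.trans inter_subset_left, hYne, hYm, fun u hu v hv huv => ?_⟩
    by_cases hvW : v ∈ W
    · exact hYcl u hu v (by grind) huv
    · have huT := hT u (inter_subset_right (hYX hu)) v (by grind) huv
      have := hX (inter_subset_left (hYX hu))
      grind
  · refine h₂ X (fun x hx => ?_) hXne
    have : x ∉ W := fun hxW => hXW ⟨x, mem_inter.2 ⟨hx, hxW⟩⟩
    grind

theorem exists_isSmallSeparator_of_forall_not_isExpanderOn {α : Type*} [DecidableEq α]
    (G : SimpleGraph α) [DecidableRel G.Adj] {ε : ℝ} (hε : 0 ≤ ε) {m : ℕ}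
    (hG : ∀ U : Finset α, m ≤ #U → ¬ IsExpanderOn G U ε) (U : Finset α) :
    ∃ S : Finset α, (#S : ℝ) ≤ ε * #U * Real.logb 2 #U ∧ IsSmallSeparator G m U S := by
  induction U using Finset.strongInduction with
  | H U ih =>
  by_cases hU : #U < m
  · have hlog : 0 ≤ Real.logb 2 #U :=
      div_nonneg (Real.log_natCast_nonneg _) (Real.log_nonneg one_le_two)
    refine ⟨∅, by simpa using mul_nonneg (by positivity) hlog,
      fun X hX hXne => ⟨X, subset_rfl, hXne, ?_, by simp⟩⟩
    exact (card_le_card (hX.trans sdiff_subset)).trans_lt hU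
  obtain ⟨W, hWU, hWne, hW2, hWcut⟩ := exists_sparse_cut_of_not_isExpanderOn (hG U (not_lt.1 hU))
  have hcardU := card_sdiff_add_card_eq_card hWU
  have hWne_U : W ≠ U := by
    rintro rfl
    have := hWne.card_pos
    omega
  obtain ⟨S₁, hS₁, hsep₁⟩ := ih W (hWU.ssubset_of_ne hWne_U)
  obtain ⟨S₂, hS₂, hsep₂⟩ := ih (U \ W) (sdiff_ssubset hWU hWne)
  set T := ((W ×ˢ (U \ W)).filter fun p => G.Adj p.1 p.2).image Prod.fst
  have hmemT : ∀ u ∈ W, ∀ v ∈ U \ W, G.Adj u v → u ∈ T := fun u hu v hv huv =>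
    mem_image.2 ⟨(u, v), mem_filter.2 ⟨mem_product.2 ⟨hu, hv⟩, huv⟩, rfl⟩
  refine ⟨S₁ ∪ S₂ ∪ T, ?_, hsep₁.union_of_cut hsep₂ hmemT⟩
  have hTcard : (#T : ℝ) ≤ ε * #W := (Nat.cast_le.2 card_image_le).trans hWcut.le
  have hunion : (#(S₁ ∪ S₂ ∪ T) : ℝ) ≤ #S₁ + #S₂ + #T := by
    exact_mod_cast (card_union_le _ _).trans (Nat.add_le_add_right (card_union_le _ _) _)
  have hsplit : (#U : ℝ) = #W + #(U \ W) := by rw [← hcardU]; push_cast; ring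
  have hrec := mul_logb_add_mul_logb_add_le (a := #W) (b := #(U \ W))
    (by exact_mod_cast hWne.card_pos) (by exact_mod_cast (by omega : #W ≤ #(U \ W)))
  rw [← hsplit] at hrec
  calc (#(S₁ ∪ S₂ ∪ T) : ℝ)
      ≤ ε * (#W * Real.logb 2 #W + #(U \ W) * Real.logb 2 #(U \ W) + #W) := by linarith
    _ ≤ ε * #U * Real.logb 2 #U := by rw [mul_assoc]; exact mul_le_mul_of_nonneg_left hrec hε

lemma mulVec_ite_mem_eq_zero {r n : ℕ} {H : Matrix (Fin r) (Fin n) (ZMod 2)} {x : Fin n → ZMod 2}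
    (hx : H *ᵥ x = 0) {Y : Finset (Fin n)}
    (hY : ∀ u ∈ Y, ∀ v ∉ Y, x u ≠ 0 → x v ≠ 0 → ¬ (connGraph H).Adj u v) :
    H *ᵥ (fun v => if v ∈ Y then x v else 0) = 0 := by
  funext i
  have hrow : ∑ v, H i v * x v = 0 := congrFun hx i
  simp only [Matrix.mulVec, dotProduct, mul_ite, mul_zero, Pi.zero_apply]
  rw [← sum_filter]
  by_cases hi : ∃ u ∈ Y, H i u * x u ≠ 0
  · obtain ⟨u, huY, hu⟩ := hi
    obtain ⟨hHu, hxu⟩ := mul_ne_zero_iff.1 hu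
    rw [← hrow]
    refine sum_subset (filter_subset _ _) fun v _ hv => ?_
    by_contra hv'
    obtain ⟨hHv, hxv⟩ := mul_ne_zero_iff.1 hv'
    have hvY : v ∉ Y := by simpa using hv
    exact hY u huY v hvY hxu hxv ⟨fun h => hvY (h ▸ huY), i, hHu, hHv⟩
  · simp only [not_exists, not_and, not_not] at hi
    exact sum_eq_zero fun u hu => hi u (mem_filter.1 hu).2

lemma eq_zero_of_isSmallSeparator {r n m : ℕ} {H : Matrix (Fin r) (Fin n) (ZMod 2)}
    {S : Finset (Fin n)} (hS : IsSmallSeparator (connGraph H) m univ S)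
    (hm : ∀ y : Fin n → ZMod 2, H *ᵥ y = 0 → y ≠ 0 → m ≤ hammingNorm y)
    {x : Fin n → ZMod 2} (hx : H *ᵥ x = 0) (hxS : ∀ i ∈ S, x i = 0) :
    x = 0 := by
  by_contra hx0
  obtain ⟨Y, hYX, ⟨u, huY⟩, hYm, hYcl⟩ := hS (univ.filter (x · ≠ 0))
    (fun v hv => mem_sdiff.2 ⟨mem_univ v, fun hvS => (mem_filter.1 hv).2 (hxS v hvS)⟩)
    (by simpa [filter_nonempty_iff, funext_iff] using hx0)
  set y : Fin n → ZMod 2 := fun v => if v ∈ Y then x v else 0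
  have hy : H *ᵥ y = 0 := mulVec_ite_mem_eq_zero hx fun u hu v hv _ hxv =>
    hYcl u hu v (mem_sdiff.2 ⟨by simpa using hxv, hv⟩)
  have hy0 : y ≠ 0 := fun h => (mem_filter.1 (hYX huY)).2 (by simpa [y, huY] using congrFun h u)
  have hyY : hammingNorm y ≤ #Y := card_le_card fun v hv => by
    by_contra hvY
    simp [y, hvY] at hv
  exact ((hm y hy hy0).trans hyY).not_gt hYm

theorem Submodule.finrank_le_card_of_forall_eq_zero_on {K ι : Type*} [Field K] [Fintype ι]
    (C : Submodule K (ι → K)) (S : Finset ι) (hS : ∀ x ∈ C, (∀ i ∈ S, x i = 0) → x = 0) :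
    Module.finrank K C ≤ #S := by
  let restrict : C →ₗ[K] (S → K) := (LinearMap.funLeft K K Subtype.val).comp C.subtype
  have hinj : Function.Injective restrict := by
    refine (injective_iff_map_eq_zero restrict).2 fun x hx => Subtype.ext ?_
    exact hS x x.2 fun i hi => congrFun hx ⟨i, hi⟩
  simpa using LinearMap.finrank_le_finrank_of_injective hinj

/-- There is a universal constant `c` such that any classical `[n,k,d]` code whose connectivity
graph has no induced `ε`-expander subgraph on `m` or more vertices obeys `d ≤ 3m` or
`k ≤ 2c·log(n)·εn`. -/
theorem stmt8 : ∃ c : ℝ, 0 < c ∧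
    ∀ (n r k d m : ℕ) (H : Matrix (Fin r) (Fin n) (ZMod 2)) (ε : ℝ), 0 ≤ ε →
      Module.finrank (ZMod 2) (LinearMap.ker H.mulVecLin) = k →
      (∀ x : Fin n → ZMod 2, H.mulVec x = 0 → x ≠ 0 → d ≤ hammingNorm x) →
      (¬ ∃ U : Finset (Fin n), m ≤ U.card ∧ IsExpanderOn (connGraph H) U ε) →
      (d ≤ 3 * m ∨ (k : ℝ) ≤ 2 * c * Real.log n * ε * n) := by
  refine ⟨1 / (2 * Real.log 2), by positivity, ?_⟩
  intro n r k d m H ε hε hk hd hnoexp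
  refine or_iff_not_imp_left.2 fun hdm => ?_
  obtain ⟨S, hScard, hS⟩ := exists_isSmallSeparator_of_forall_not_isExpanderOn (connGraph H) hε
    (fun U hU hexp => hnoexp ⟨U, hU, hexp⟩) univ
  have hm : ∀ y : Fin n → ZMod 2, H *ᵥ y = 0 → y ≠ 0 → m ≤ hammingNorm y :=
    fun y hy hy0 => (by omega : m ≤ d).trans (hd y hy hy0)
  have hkS : k ≤ #S := hk ▸ Submodule.finrank_le_card_of_forall_eq_zero_on _ S
    fun x hx hxS => eq_zero_of_isSmallSeparator hS hm hx hxS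
  calc (k : ℝ) ≤ #S := by exact_mod_cast hkS
    _ ≤ ε * n * Real.logb 2 n := by simpa using hScard
    _ = 2 * (1 / (2 * Real.log 2)) * Real.log n * ε * n := by rw [Real.logb]; ring
end
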